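/- arXiv:1605.06187 — 5 statements merged into one kernel-verified Lean document; each statement's English description precedes it below -/
import Mathlib

section
/- Let J : Z^d × Z^d → [0,∞) be a system of interaction coefficients. For two configurations u, v : Z^d → {-1,1} define min{u,v} and max{u,v} pointwise, and for sets Γ, Ω ⊆ Z^d define I_{Γ,Ω}(w) := Σ_{i ∈ Γ, j ∈ Ω} J_{ij}(1 - w_i w_j). Then I_{Γ,Ω}(min{u,v}) + I_{Γ,Ω}(max{u,v}) ≤ I_{Γ,Ω}(u) + I_{Γ,Ω}(v), interpreted in [0,∞] (in particular the left side is finite whenever the right side is). -/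
open scoped ENNReal

/-!
Bond by bond, the claim is the two-term rearrangement inequality
`a c + b e ≤ min a b * min c e + max a b * max c e`, weighted by `J ≥ 0`. All terms are
nonnegative, so the sums in `[0, ∞]` can be compared termwise.
-/

theorem mul_add_mul_le_min_mul_min_add_max_mul_max {R : Type*} [CommRing R] [LinearOrder R]
    [IsStrictOrderedRing R] (a b c e : R) :
    a * c + b * e ≤ min a b * min c e + max a b * max c e := by
  rcases le_total a b with hab | hba <;> rcases le_total c e with hce | hec
  · simp [hab, hce]
  · simp only [min_eq_left hab, max_eq_right hab, min_eq_right hec, max_eq_left hec]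
    nlinarith [mul_nonneg (sub_nonneg.2 hab) (sub_nonneg.2 hec)]
  · simp only [min_eq_right hba, max_eq_left hba, min_eq_left hce, max_eq_right hce]
    nlinarith [mul_nonneg (sub_nonneg.2 hba) (sub_nonneg.2 hce)]
  · simp only [min_eq_right hba, max_eq_left hba, min_eq_right hec, max_eq_left hec]
    linarith [mul_comm a c, mul_comm b e]

theorem one_sub_mul_nonneg_of_abs_le_one {x y : ℝ} (hx : |x| ≤ 1) (hy : |y| ≤ 1) :
    0 ≤ 1 - x * y := by
  have hxy : |x * y| ≤ 1 := abs_mul x y ▸ mul_le_one₀ hx (abs_nonneg y) hy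
  linarith [le_abs_self (x * y)]

/-- The bounds on the spins keep all four energies nonnegative, so `ENNReal.ofReal` does not
truncate them. -/
theorem ofReal_bond_min_add_ofReal_bond_max_le {J a b c e : ℝ} (hJ : 0 ≤ J)
    (ha : |a| ≤ 1) (hb : |b| ≤ 1) (hc : |c| ≤ 1) (he : |e| ≤ 1) :
    ENNReal.ofReal (J * (1 - min a b * min c e)) + ENNReal.ofReal (J * (1 - max a b * max c e))
      ≤ ENNReal.ofReal (J * (1 - a * c)) + ENNReal.ofReal (J * (1 - b * e)) := by
  have abs_min : ∀ {x y : ℝ}, |x| ≤ 1 → |y| ≤ 1 → |min x y| ≤ 1 := fun hx hy =>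
    abs_le.2 ⟨le_min (abs_le.1 hx).1 (abs_le.1 hy).1, min_le_of_left_le (abs_le.1 hx).2⟩
  have abs_max : ∀ {x y : ℝ}, |x| ≤ 1 → |y| ≤ 1 → |max x y| ≤ 1 := fun hx hy =>
    abs_le.2 ⟨le_max_of_le_left (abs_le.1 hx).1, max_le (abs_le.1 hx).2 (abs_le.1 hy).2⟩
  rw [← ENNReal.ofReal_add
      (mul_nonneg hJ (one_sub_mul_nonneg_of_abs_le_one (abs_min ha hb) (abs_min hc he)))
      (mul_nonneg hJ (one_sub_mul_nonneg_of_abs_le_one (abs_max ha hb) (abs_max hc he))),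
    ← ENNReal.ofReal_add (mul_nonneg hJ (one_sub_mul_nonneg_of_abs_le_one ha hc))
      (mul_nonneg hJ (one_sub_mul_nonneg_of_abs_le_one hb he))]
  refine ENNReal.ofReal_le_ofReal ?_
  nlinarith [mul_le_mul_of_nonneg_left (mul_add_mul_le_min_mul_min_add_max_mul_max a b c e) hJ]

theorem abs_le_one_of_eq_one_or_eq_neg_one {x : ℝ} (hx : x = 1 ∨ x = -1) : |x| ≤ 1 := by
  rcases hx with rfl | rfl <;> norm_num

/-- the interaction energy `I_{Γ,Ω}` decreases under min/max:
`I_{Γ,Ω}(min{u,v}) + I_{Γ,Ω}(max{u,v}) ≤ I_{Γ,Ω}(u) + I_{Γ,Ω}(v)`, in `[0,∞]`. -/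
theorem interaction_min_max_decrease {d : ℕ}
    (J : (Fin d → ℤ) → (Fin d → ℤ) → ℝ) (hJ : ∀ i j, 0 ≤ J i j)
    (u v : (Fin d → ℤ) → ℝ)
    (hu : ∀ i, u i = 1 ∨ u i = -1) (hv : ∀ i, v i = 1 ∨ v i = -1)
    (Γ Ω : Set (Fin d → ℤ)) :
    (∑' (i : Γ) (j : Ω),
        ENNReal.ofReal (J i.1 j.1 * (1 - min (u i.1) (v i.1) * min (u j.1) (v j.1))))
      + (∑' (i : Γ) (j : Ω),
        ENNReal.ofReal (J i.1 j.1 * (1 - max (u i.1) (v i.1) * max (u j.1) (v j.1))))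
      ≤ (∑' (i : Γ) (j : Ω), ENNReal.ofReal (J i.1 j.1 * (1 - u i.1 * u j.1)))
        + (∑' (i : Γ) (j : Ω), ENNReal.ofReal (J i.1 j.1 * (1 - v i.1 * v j.1))) := by
  have hu' i := abs_le_one_of_eq_one_or_eq_neg_one (hu i)
  have hv' i := abs_le_one_of_eq_one_or_eq_neg_one (hv i)
  simp only [← ENNReal.tsum_add]
  exact ENNReal.tsum_le_tsum fun i => ENNReal.tsum_le_tsum fun j =>
    ofReal_bond_min_add_ofReal_bond_max_le (hJ i j) (hu' i) (hv' i) (hu' j) (hv' j)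
end

section
/- For every finite nonempty set Γ ⊂ Z^d, every site i ∈ Z^d, and every s ∈ (0,1), one has Σ_{j ∈ Z^d \ Γ} |i - j|_∞^{-(d+s)} ≥ c (#Γ)^{-s/d}, where c > 0 is a constant depending only on s (one may take c = 2^{-s}/s). -/
/-!
Let `N = #Γ` and let `R` be the least radius for which the sup-norm box of radius `R` around `i`
has at least `2(N + 1)` points. Removing `Γ` and `i` leaves at least `N + 1` points of the box,
each at distance between `1` and `R` from `i`, so the sum is at least `(N + 1) R^{-(d+s)}`.
Minimality gives `R^d ≤ 2(N + 1) ≤ 4N`, hence `R^s ≤ 4 N^{s/d}` and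
`(N + 1) R^{-(d+s)} ≥ N^{-s/d} / 8`.
-/

open scoped ENNReal
open Finset

lemma rpow_add_le_of_rpow_le {d s x R : ℝ} (hd : 0 < d) (hs : 0 ≤ s) (hsd : s ≤ d) (hx : 1 ≤ x)
    (hR : 0 < R) (hRd : R ^ d ≤ 2 * (x + 1)) :
    R ^ (d + s) ≤ 8 * (x + 1) * x ^ (s / d) := by
  have hRs : R ^ s ≤ 4 * x ^ (s / d) :=
    calc R ^ s = (R ^ d) ^ (s / d) := by rw [← Real.rpow_mul hR.le, mul_div_cancel₀ s hd.ne']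
      _ ≤ (4 * x) ^ (s / d) := by gcongr; linarith
      _ = 4 ^ (s / d) * x ^ (s / d) := Real.mul_rpow (by norm_num) (by linarith)
      _ ≤ 4 ^ (1 : ℝ) * x ^ (s / d) := by
        gcongr
        · norm_num
        · exact div_le_one_of_le₀ hsd hd.le
      _ = 4 * x ^ (s / d) := by rw [Real.rpow_one]
  calc R ^ (d + s) = R ^ d * R ^ s := Real.rpow_add hR d s
    _ ≤ 2 * (x + 1) * (4 * x ^ (s / d)) := by gcongr
    _ = 8 * (x + 1) * x ^ (s / d) := by ring

lemma mul_rpow_neg_le_of_rpow_le {d s x R : ℝ} (hd : 0 < d) (hs : 0 ≤ s) (hsd : s ≤ d)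
    (hx : 1 ≤ x) (hR : 0 < R) (hRd : R ^ d ≤ 2 * (x + 1)) :
    1 / 8 * x ^ (-(s / d)) ≤ (x + 1) * R ^ (-(d + s)) := by
  have hxs : 0 < x ^ (s / d) := Real.rpow_pos_of_pos (by linarith) _
  rw [Real.rpow_neg (by linarith), Real.rpow_neg hR.le, ← div_eq_mul_inv (x + 1),
    le_div_iff₀ (Real.rpow_pos_of_pos hR _)]
  calc 1 / 8 * (x ^ (s / d))⁻¹ * R ^ (d + s)
      ≤ 1 / 8 * (x ^ (s / d))⁻¹ * (8 * (x + 1) * x ^ (s / d)) := by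
        gcongr; exact rpow_add_le_of_rpow_le hd hs hsd hx hR hRd
    _ = x + 1 := by field_simp

lemma Nat.exists_pow_le_le_two_mul_add_one_pow {d m : ℕ} (hd : d ≠ 0) (hm : 2 ≤ m) :
    ∃ R, 1 ≤ R ∧ R ^ d ≤ m ∧ m ≤ (2 * R + 1) ^ d := by
  have hex : ∃ R, m ≤ (2 * R + 1) ^ d :=
    ⟨m, (show m ≤ 2 * m + 1 by omega).trans (Nat.le_self_pow hd _)⟩
  have hR : 1 ≤ Nat.find hex := by
    by_contra! h
    have := Nat.find_spec hex
    rw [Nat.lt_one_iff.mp h, mul_zero, zero_add, one_pow] at this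
    omega
  refine ⟨Nat.find hex, hR, ?_, Nat.find_spec hex⟩
  · -- `R ≤ 2(R - 1) + 1` and `R - 1` is too small a radius
    have hlt : (2 * (Nat.find hex - 1) + 1) ^ d < m :=
      not_le.mp (Nat.find_min hex (by omega))
    exact (Nat.pow_le_pow_left (by omega) d).trans hlt.le

section Box

variable {ι : Type*} [Fintype ι] [DecidableEq ι]

lemma card_Icc_sub_add_natCast (i : ι → ℤ) (R : ℕ) :
    #(Icc (i - R) (i + R)) = (2 * R + 1) ^ Fintype.card ι := by
  have hIcc : ∀ n, #(Icc (i n - R) (i n + R)) = 2 * R + 1 := fun n => by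
    rw [Int.card_Icc]; omega
  simp only [Pi.card_Icc, Pi.sub_apply, Pi.add_apply, Pi.natCast_apply, hIcc, prod_const,
    card_univ]

lemma sup_natAbs_sub_le_of_mem_Icc {i j : ι → ℤ} {R : ℕ} (hj : j ∈ Icc (i - R) (i + R)) :
    univ.sup (fun n => (i n - j n).natAbs) ≤ R :=
  Finset.sup_le fun n _ => by
    have h₁ : i n - R ≤ j n := by simpa using (mem_Icc.mp hj).1 n
    have h₂ : j n ≤ i n + R := by simpa using (mem_Icc.mp hj).2 n
    omega

end Box

lemma one_le_sup_natAbs_sub {ι : Type*} [Fintype ι] {i j : ι → ℤ} (hij : j ≠ i) :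
    1 ≤ univ.sup (fun n => (i n - j n).natAbs) := by
  obtain ⟨n, hn⟩ := Function.ne_iff.mp hij
  exact le_trans (by omega) (Finset.le_sup (f := fun n => (i n - j n).natAbs) (mem_univ n))

lemma ENNReal.card_mul_le_tsum_subtype {α : Type*} {p : α → Prop} {f : α → ℝ≥0∞}
    {S : Finset α} {a : ℝ≥0∞} (hSp : ∀ j ∈ S, p j) (ha : ∀ j ∈ S, a ≤ f j) :
    #S * a ≤ ∑' j : {j // p j}, f j :=
  calc (#S : ℝ≥0∞) * a = ∑ _j ∈ S, a := by rw [sum_const, nsmul_eq_mul]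
    _ ≤ ∑ j ∈ S, {j | p j}.indicator f j :=
      sum_le_sum fun j hj => (ha j hj).trans_eq (Set.indicator_of_mem (hSp j hj) f).symm
    _ ≤ ∑' j, {j | p j}.indicator f j := ENNReal.sum_le_tsum S
    _ = ∑' j : {j // p j}, f j := (tsum_subtype {j | p j} f).symm

lemma card_mul_rpow_neg_le_tsum_compl {ι : Type*} [Fintype ι] [DecidableEq ι] {t : ℝ}
    (ht : 0 ≤ t) (Γ : Finset (ι → ℤ)) (i : ι → ℤ) (R : ℕ) :
    #(Icc (i - R) (i + R) \ insert i Γ) * ENNReal.ofReal ((R : ℝ) ^ (-t)) ≤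
      ∑' j : {j : ι → ℤ // j ∉ Γ ∧ j ≠ i},
        ENNReal.ofReal (((univ.sup fun n => (i n - j.1 n).natAbs : ℕ) : ℝ) ^ (-t)) := by
  refine ENNReal.card_mul_le_tsum_subtype (p := fun j => j ∉ Γ ∧ j ≠ i)
    (f := fun j => ENNReal.ofReal (((univ.sup fun n => (i n - j n).natAbs : ℕ) : ℝ) ^ (-t)))
    (fun j hj => ?_) fun j hj => ?_
  all_goals obtain ⟨hjIcc, hjΓi⟩ := mem_sdiff.mp hj; rw [mem_insert, not_or] at hjΓi
  · exact ⟨hjΓi.2, hjΓi.1⟩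
  · refine ENNReal.ofReal_le_ofReal (Real.rpow_le_rpow_of_nonpos ?_ ?_ (neg_nonpos.mpr ht))
    · exact_mod_cast one_le_sup_natAbs_sub hjΓi.1
    · exact_mod_cast sup_natAbs_sub_le_of_mem_Icc hjIcc

/-- for every finite nonempty `Γ ⊂ ℤ^d` and every site `i`,
`Σ_{j ∉ Γ, j ≠ i} |i - j|_∞^{-(d+s)} ≥ c (#Γ)^{-s/d}` with `c > 0` depending only on `s`. -/
theorem discrete_tail_lower_bound (s : ℝ) (hs : s ∈ Set.Ioo (0 : ℝ) 1) :
    ∃ c : ℝ, 0 < c ∧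
      ∀ (d : ℕ), 1 ≤ d → ∀ Γ : Finset (Fin d → ℤ), Γ.Nonempty → ∀ i : Fin d → ℤ,
        ENNReal.ofReal (c * (Γ.card : ℝ) ^ (-(s / d))) ≤
          ∑' j : {j : Fin d → ℤ // j ∉ Γ ∧ j ≠ i},
            ENNReal.ofReal
              (((Finset.univ.sup fun n => (i n - j.1 n).natAbs : ℕ) : ℝ) ^ (-((d : ℝ) + s))) := by
  refine ⟨1 / 8, by norm_num, fun d hd Γ hΓ i => ?_⟩
  obtain ⟨R, hR, hRd, hbox⟩ :=
    Nat.exists_pow_le_le_two_mul_add_one_pow (d := d) (m := 2 * (#Γ + 1)) (by omega) (by omega)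
  have hS : #Γ + 1 ≤ #(Icc (i - R) (i + R) \ insert i Γ) := by
    have h₁ := card_insert_le i Γ
    have h₂ := le_card_sdiff (insert i Γ) (Icc (i - R) (i + R))
    rw [card_Icc_sub_add_natCast, Fintype.card_fin] at h₂
    omega
  have hreal : 1 / 8 * (#Γ : ℝ) ^ (-(s / d)) ≤ (#Γ + 1) * (R : ℝ) ^ (-((d : ℝ) + s)) :=
    mul_rpow_neg_le_of_rpow_le (by positivity) hs.1.le (hs.2.le.trans (by exact_mod_cast hd))
      (by exact_mod_cast card_pos.mpr hΓ) (by positivity) (by exact_mod_cast hRd)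
  calc ENNReal.ofReal (1 / 8 * (#Γ : ℝ) ^ (-(s / d)))
      ≤ ENNReal.ofReal ((#Γ + 1) * (R : ℝ) ^ (-((d : ℝ) + s))) := ENNReal.ofReal_le_ofReal hreal
    _ ≤ #(Icc (i - R) (i + R) \ insert i Γ) * ENNReal.ofReal ((R : ℝ) ^ (-((d : ℝ) + s))) := by
      rw [ENNReal.ofReal_mul (by positivity)]
      gcongr
      exact_mod_cast hS
    _ ≤ _ := card_mul_rpow_neg_le_tsum_compl (by linarith [hs.1]) Γ i R
end

section
/- Let s ∈ (0,1) and Ω ⊂ R^d be a bounded open set with Lipschitz boundary. Then ∫_Ω dist(x, ∂Ω)^{-s} dx < ∞. -/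
open scoped ENNReal NNReal
open MeasureTheory

/-- A set `Ω ⊆ ℝ^{d+1}` has Lipschitz boundary if near any boundary point, up to a
(Euclidean) isometric change of coordinates, `Ω` is the open epigraph of a Lipschitz
function of `d` variables. -/
def HasLipschitzBoundary {d : ℕ} (Ω : Set (EuclideanSpace ℝ (Fin (d + 1)))) : Prop :=
  ∀ p ∈ frontier Ω, ∃ r : ℝ, 0 < r ∧
    ∃ (e : EuclideanSpace ℝ (Fin (d + 1)) ≃ᵢ (WithLp 2 (EuclideanSpace ℝ (Fin d) × ℝ)))
      (φ : EuclideanSpace ℝ (Fin d) → ℝ) (L : ℝ≥0),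
      LipschitzWith L φ ∧
      ∀ x ∈ Metric.ball p r,
        (x ∈ Ω ↔ φ ((WithLp.equiv 2 (EuclideanSpace ℝ (Fin d) × ℝ) (e x)).1)
          < (WithLp.equiv 2 (EuclideanSpace ℝ (Fin d) × ℝ) (e x)).2)

/-!
In a Lipschitz chart, a point of `Ω` within `ε` of the complement lies in a layer of height
`(1 + L) ε` above the graph, so by compactness of `∂Ω` the collar `{x ∈ Ω | dist(x, ∂Ω) < ε}`
has volume `O(ε)`. By the layer-cake formula, `∫_Ω dist(x, ∂Ω)^{-s} dx` is then bounded by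
`|Ω| a + C ∫_a^∞ t^{-1/s} dt` for some `a > 0`, which is finite because `1/s > 1`.
-/

open Set Filter Topology Metric Module

theorem lintegral_ofReal_rpow_neg_lt_top {α : Type*} [MeasurableSpace α] {μ : Measure α}
    [IsFiniteMeasure μ] {g : α → ℝ} {s : ℝ} {C : ℝ≥0∞} (hg₀ : ∀ x, 0 ≤ g x)
    (hg : AEMeasurable g μ) (hs₀ : 0 < s) (hs₁ : s < 1) (hC : C ≠ ⊤)
    (hμ : ∀ᶠ ε in 𝓝[>] 0, μ {x | 0 < g x ∧ g x < ε} ≤ C * ENNReal.ofReal ε) :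
    ∫⁻ x, ENNReal.ofReal (g x ^ (-s)) ∂μ < ⊤ := by
  obtain ⟨u, hu, hμu⟩ := (nhdsGT_basis (0 : ℝ)).eventually_iff.1 hμ
  have hneg : -s < 0 := neg_lt_zero.2 hs₀
  set a := u ^ (-s)
  have ha : 0 < a := Real.rpow_pos_of_pos hu _
  have hsuperlevel : ∀ t ∈ Ioi a,
      μ {x | t < g x ^ (-s)} ≤ C * ENNReal.ofReal (t ^ (-s)⁻¹) := by
    intro t (ht : a < t)
    have ht₀ : 0 < t := ha.trans ht
    have hsub : {x | t < g x ^ (-s)} ⊆ {x | 0 < g x ∧ g x < t ^ (-s)⁻¹} := by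
      intro x (hx : t < g x ^ (-s))
      -- `0 ^ (-s) = 0` in Lean, so the zeros of `g` lie in no superlevel set
      have hgx : 0 < g x := (hg₀ x).lt_of_ne fun h => by
        rw [← h, Real.zero_rpow hneg.ne] at hx
        exact ht₀.not_gt hx
      exact ⟨hgx, (Real.lt_rpow_inv_iff_of_neg hgx ht₀ hneg).2 hx⟩
    refine (measure_mono hsub).trans (hμu ⟨Real.rpow_pos_of_pos ht₀ _, ?_⟩)
    exact (Real.rpow_inv_lt_iff_of_neg ht₀ hu hneg).2 ht
  have hexp : (-s)⁻¹ < -1 := by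
    rw [inv_neg, neg_lt_neg_iff]
    exact (one_lt_inv₀ hs₀).2 hs₁
  have htail : ∫⁻ t in Ioi a, ENNReal.ofReal (t ^ (-s)⁻¹) < ⊤ :=
    (integrableOn_Ioi_rpow_of_lt hexp ha).lintegral_lt_top
  rw [lintegral_eq_lintegral_meas_lt μ (Eventually.of_forall fun x => Real.rpow_nonneg (hg₀ x) _)
    (hg.pow_const _), ← Ioc_union_Ioi_eq_Ioi ha.le]
  calc ∫⁻ t in Ioc 0 a ∪ Ioi a, μ {x | t < g x ^ (-s)}
      ≤ (∫⁻ _ in Ioc 0 a, μ univ) + ∫⁻ t in Ioi a, C * ENNReal.ofReal (t ^ (-s)⁻¹) :=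
        (lintegral_union_le _ _ _).trans <| add_le_add
          (setLIntegral_mono measurable_const fun t _ => measure_mono (μ := μ) (subset_univ _))
          (setLIntegral_mono' measurableSet_Ioi hsuperlevel)
    _ < ⊤ := by
        rw [lintegral_const_mul' _ _ hC]
        simp only [setLIntegral_const, Real.volume_Ioc]
        exact ENNReal.add_lt_top.2 ⟨ENNReal.mul_lt_top (measure_lt_top μ univ)
          ENNReal.ofReal_lt_top, ENNReal.mul_lt_top hC.lt_top htail⟩

theorem lintegral_ofReal_infDist_rpow_neg_lt_top {X : Type*} [PseudoMetricSpace X]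
    [MeasurableSpace X] [OpensMeasurableSpace X] {μ : Measure X} [IsFiniteMeasure μ]
    {F : Set X} {s : ℝ} {C : ℝ≥0∞} (hs₀ : 0 < s) (hs₁ : s < 1) (hC : C ≠ ⊤)
    (hμ : ∀ᶠ ε in 𝓝[>] 0, μ (thickening ε F) ≤ C * ENNReal.ofReal ε) :
    ∫⁻ x, ENNReal.ofReal (infDist x F ^ (-s)) ∂μ < ⊤ := by
  refine lintegral_ofReal_rpow_neg_lt_top (fun _ => infDist_nonneg)
    (continuous_infDist_pt F).measurable.aemeasurable hs₀ hs₁ hC ?_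
  filter_upwards [hμ] with ε hε
  refine (measure_mono fun x hx => ?_).trans hε
  obtain ⟨hpos, hlt⟩ := hx
  have hF : F.Nonempty := nonempty_iff_ne_empty.2 fun h => by simp [h] at hpos
  exact (mem_thickening_iff_infDist_lt hF).2 hlt

theorem inter_thickening_frontier_inter_ball_subset {X : Type*} [PseudoMetricSpace X]
    {Ω : Set X} (hΩ : IsOpen Ω) {p : X} {r ε : ℝ} (hε : ε ≤ r / 2) :
    Ω ∩ thickening ε (frontier Ω ∩ ball p (r / 2)) ⊆
      Ω ∩ ball p r ∩ thickening ε (ball p r \ Ω) := by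
  rintro x ⟨hxΩ, hx⟩
  obtain ⟨z, ⟨hzF, hzp⟩, hxz⟩ := mem_thickening_iff.1 hx
  have hr : 0 < r := by linarith [pos_of_mem_ball hzp]
  have hzr : z ∈ ball p r := ball_subset_ball (half_le_self hr.le) hzp
  have hxr : x ∈ ball p r := mem_ball.2 <| by
    linarith [dist_triangle x z p, mem_ball.1 hzp]
  exact ⟨⟨hxΩ, hxr⟩, mem_thickening_iff.2 ⟨z, ⟨hzr, (hΩ.frontier_eq ▸ hzF).2⟩, hxz⟩⟩

theorem IsometryEquiv.ofLp_mem_regionBetween_of_dist_lt {E V : Type*} [PseudoMetricSpace E]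
    [PseudoMetricSpace V] (e : E ≃ᵢ WithLp 2 (V × ℝ)) {φ : V → ℝ} {L : ℝ≥0}
    (hφ : LipschitzWith L φ) {Ω : Set E} {p : E} {r : ℝ}
    (hΩ : ∀ x ∈ ball p r, (x ∈ Ω ↔ φ (WithLp.ofLp (e x)).1 < (WithLp.ofLp (e x)).2))
    {x z : E} {ε : ℝ} (hx : x ∈ Ω ∩ ball p r) (hz : z ∈ ball p r \ Ω) (hxz : dist x z < ε) :
    WithLp.ofLp (e x) ∈
      regionBetween φ (fun v => φ v + (1 + L) * ε) (closedBall (WithLp.ofLp (e p)).1 r) := by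
  have hfst : ∀ y y', dist (WithLp.ofLp (e y)).1 (WithLp.ofLp (e y')).1 ≤ dist y y' :=
    fun y y' => (WithLp.dist_fst_le (e y) (e y')).trans_eq (e.dist_eq y y')
  have hsnd : ∀ y y', dist (WithLp.ofLp (e y)).2 (WithLp.ofLp (e y')).2 ≤ dist y y' :=
    fun y y' => (WithLp.dist_snd_le (e y) (e y')).trans_eq (e.dist_eq y y')
  have hx_above := (hΩ x hx.2).1 hx.1
  have hz_below := not_lt.1 (mt (hΩ z hz.1).2 hz.2)
  refine ⟨mem_closedBall.2 ((hfst x p).trans (mem_ball.1 hx.2).le), hx_above, ?_⟩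
  have hsnd_xz : (WithLp.ofLp (e x)).2 - (WithLp.ofLp (e z)).2 ≤ dist x z :=
    (le_abs_self _).trans ((Real.dist_eq _ _).symm.trans_le (hsnd x z))
  have hφ_zx : φ (WithLp.ofLp (e z)).1 - φ (WithLp.ofLp (e x)).1 ≤ L * dist x z :=
    (le_abs_self _).trans <| (Real.dist_eq _ _).symm.trans_le <|
      (hφ.dist_le_mul _ _).trans (mul_le_mul_of_nonneg_left (dist_comm x z ▸ hfst z x) L.2)
  have hε : (1 + L) * dist x z < (1 + L) * ε := mul_lt_mul_of_pos_left hxz (by positivity)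
  show _ < φ _ + _
  linarith

section Chart

variable {E V : Type*}
  [NormedAddCommGroup E] [InnerProductSpace ℝ E] [FiniteDimensional ℝ E]
  [MeasurableSpace E] [BorelSpace E]
  [NormedAddCommGroup V] [InnerProductSpace ℝ V] [FiniteDimensional ℝ V]
  [MeasurableSpace V] [BorelSpace V]

theorem IsometryEquiv.measurePreserving_volume (e : E ≃ᵢ V) : MeasurePreserving e := by
  have hrank : finrank ℝ E = finrank ℝ V :=
    e.toRealAffineIsometryEquiv.linearIsometryEquiv.toLinearEquiv.finrank_eq
  rw [← InnerProductSpace.euclideanHausdorffMeasure_eq_volume (V := E),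
    ← InnerProductSpace.euclideanHausdorffMeasure_eq_volume (V := V), hrank]
  exact e.measurePreserving_euclideanHausdorffMeasure _

theorem IsometryEquiv.measurePreserving_ofLp_comp (e : E ≃ᵢ WithLp 2 (V × ℝ)) :
    MeasurePreserving fun x => WithLp.ofLp (e x) :=
  (WithLp.volume_preserving_ofLp V ℝ).comp e.measurePreserving_volume

theorem IsometryEquiv.volume_preimage_regionBetween_add_const (e : E ≃ᵢ WithLp 2 (V × ℝ))
    {φ : V → ℝ} (hφ : Measurable φ) (c : ℝ) {K : Set V} (hK : MeasurableSet K) :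
    volume ((fun x => WithLp.ofLp (e x)) ⁻¹' regionBetween φ (fun v => φ v + c) K)
      = ENNReal.ofReal c * volume K := by
  rw [e.measurePreserving_ofLp_comp.measure_preimage
      (measurableSet_regionBetween hφ (hφ.add_const c) hK).nullMeasurableSet,
    Measure.volume_eq_prod, volume_regionBetween_eq_lintegral hφ.aemeasurable
      (hφ.add_const c).aemeasurable hK]
  simp

theorem IsometryEquiv.volume_inter_ball_inter_thickening_le (e : E ≃ᵢ WithLp 2 (V × ℝ))
    {φ : V → ℝ} {L : ℝ≥0} (hφ : LipschitzWith L φ) {Ω : Set E} {p : E} {r : ℝ}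
    (hΩ : ∀ x ∈ ball p r, (x ∈ Ω ↔ φ (WithLp.ofLp (e x)).1 < (WithLp.ofLp (e x)).2))
    (ε : ℝ) :
    volume (Ω ∩ ball p r ∩ thickening ε (ball p r \ Ω))
      ≤ ENNReal.ofReal ((1 + L) * ε) * volume (closedBall (WithLp.ofLp (e p)).1 r) := by
  rw [← e.volume_preimage_regionBetween_add_const hφ.continuous.measurable _
    measurableSet_closedBall]
  refine measure_mono fun x ⟨hx, hxε⟩ => ?_
  obtain ⟨z, hz, hxz⟩ := mem_thickening_iff.1 hxε
  exact e.ofLp_mem_regionBetween_of_dist_lt hφ hΩ hx hz hxz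

end Chart

theorem HasLipschitzBoundary.exists_volume_inter_thickening_frontier_le {d : ℕ}
    {Ω : Set (EuclideanSpace ℝ (Fin (d + 1)))} (hΩl : HasLipschitzBoundary Ω) (hΩo : IsOpen Ω)
    (hF : IsCompact (frontier Ω)) :
    ∃ C : ℝ≥0∞, C ≠ ⊤ ∧
      ∀ᶠ ε in 𝓝[>] 0, volume (Ω ∩ thickening ε (frontier Ω)) ≤ C * ENNReal.ofReal ε := by
  choose r hr e φ L hL hΩ using fun p : frontier Ω => hΩl p p.2
  obtain ⟨t, ht⟩ := hF.elim_finite_subcover (fun p : frontier Ω => ball (p : _) (r p / 2))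
    (fun _ => isOpen_ball) fun z hz => mem_iUnion.2 ⟨⟨z, hz⟩, mem_ball_self (half_pos (hr _))⟩
  refine ⟨∑ p ∈ t, ENNReal.ofReal (1 + L p) * volume (closedBall (WithLp.ofLp (e p p)).1 (r p)),
    ENNReal.sum_ne_top.2 fun p _ => ENNReal.mul_ne_top ENNReal.ofReal_ne_top
      measure_closedBall_lt_top.ne, ?_⟩
  filter_upwards [t.eventually_all.2 fun p _ =>
    (eventually_le_nhds (half_pos (hr p))).filter_mono nhdsWithin_le_nhds] with ε hεr
  have hcover : Ω ∩ thickening ε (frontier Ω) ⊆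
      ⋃ p ∈ t, Ω ∩ ball (p : _) (r p) ∩ thickening ε (ball (p : _) (r p) \ Ω) := by
    intro x ⟨hxΩ, hx⟩
    obtain ⟨z, hzF, hxz⟩ := mem_thickening_iff.1 hx
    obtain ⟨p, hpt, hzp⟩ := mem_iUnion₂.1 (ht hzF)
    exact mem_iUnion₂.2 ⟨p, hpt, inter_thickening_frontier_inter_ball_subset hΩo (hεr p hpt)
      ⟨hxΩ, mem_thickening_iff.2 ⟨z, ⟨hzF, hzp⟩, hxz⟩⟩⟩
  calc volume (Ω ∩ thickening ε (frontier Ω))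
      ≤ ∑ p ∈ t, volume (Ω ∩ ball (p : _) (r p) ∩ thickening ε (ball (p : _) (r p) \ Ω)) :=
        (measure_mono hcover).trans (measure_biUnion_finset_le _ _)
    _ ≤ ∑ p ∈ t,
          ENNReal.ofReal ((1 + L p) * ε) * volume (closedBall (WithLp.ofLp (e p p)).1 (r p)) :=
        Finset.sum_le_sum fun p _ => (e p).volume_inter_ball_inter_thickening_le (hL p) (hΩ p) ε
    _ = _ := by
        rw [Finset.sum_mul]
        refine Finset.sum_congr rfl fun p _ => ?_
        rw [ENNReal.ofReal_mul (by positivity)]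
        ring

/-- on a bounded open set `Ω` with Lipschitz boundary,
`∫_Ω dist(x, ∂Ω)^{-s} dx < ∞` for every `s ∈ (0,1)`. -/
theorem dist_boundary_neg_power_integrable {d : ℕ} (s : ℝ) (hs : s ∈ Set.Ioo (0 : ℝ) 1)
    (Ω : Set (EuclideanSpace ℝ (Fin (d + 1))))
    (hΩo : IsOpen Ω) (hΩb : Bornology.IsBounded Ω) (hΩl : HasLipschitzBoundary Ω) :
    (∫⁻ x in Ω, ENNReal.ofReal ((Metric.infDist x (frontier Ω)) ^ (-s))) < ⊤ := by
  have hF : IsCompact (frontier Ω) :=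
    hΩb.isCompact_closure.of_isClosed_subset isClosed_frontier frontier_subset_closure
  obtain ⟨C, hC, hcollar⟩ := hΩl.exists_volume_inter_thickening_frontier_le hΩo hF
  have : IsFiniteMeasure (volume.restrict Ω) := isFiniteMeasure_restrict.2 hΩb.measure_lt_top.ne
  refine lintegral_ofReal_infDist_rpow_neg_lt_top hs.1 hs.2 hC ?_
  filter_upwards [hcollar] with ε hε
  rwa [Measure.restrict_apply' hΩo.measurableSet, inter_comm]
end

section
/- Let d ≥ 1, s ∈ (0,1), and let (v_m)_{m≥0} be a sequence of nonnegative reals with v_0 ≥ 1, v_1 ≥ 1, satisfying for all ℓ ≥ 2 the recursive inequality Σ_{m=0}^{ℓ} v_m^{(d-s)/d} ≤ c_5 (ℓ+1)^{1-s} v_ℓ for a constant c_5 > 0. Then v_ℓ ≥ c̄ ℓ^d for all ℓ ≥ 0, where c̄ := [4^{-d-1+s} / (c_5 (d+1-s))]^{d/s} (assuming c̄ ≤ 1). -/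
/-!
Strong induction on `ℓ`. If `v_m ≥ c̄ m^d` for `m < ℓ`, then with `q = (d - s)/d` the left side
of the recursion is at least `c̄^q ∑_{m<ℓ} m^{d-s} ≥ c̄^q (ℓ-1)^{d+1-s}/(d+1-s)` (compare the sum
with `∫₀^{ℓ-1} x^{d-s} dx`). Since `c̄ = c̄^q c̄^{s/d}` and `ℓ + 1 ≤ 4(ℓ - 1)` for `ℓ ≥ 2`, the
choice of `c̄` makes this at least `c₅ (ℓ+1)^{1-s} c̄ ℓ^d`, so the recursion gives `v_ℓ ≥ c̄ ℓ^d`.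
-/

open Finset

lemma rpow_succ_div_le_sum_range_rpow {p : ℝ} (hp : 0 ≤ p) (n : ℕ) :
    (n : ℝ) ^ (p + 1) / (p + 1) ≤ ∑ m ∈ range (n + 1), (m : ℝ) ^ p := by
  have hmono : MonotoneOn (fun x : ℝ => x ^ p) (Set.Icc 0 (0 + n)) :=
    fun x hx y _ hxy => Real.rpow_le_rpow hx.1 hxy hp
  have h := hmono.integral_le_sum
  rw [zero_add, integral_rpow (Or.inl (by linarith)), Real.zero_rpow (by linarith)] at h
  rw [sum_range_succ']
  simp only [zero_add, sub_zero, Nat.cast_add, Nat.cast_one] at h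
  push_cast
  linarith [Real.rpow_nonneg le_rfl p]

lemma mul_rpow_le_sum_range_rpow {p q C : ℝ} {v : ℕ → ℝ} {n : ℕ} (hp : 0 ≤ p) (hq : 0 ≤ q)
    (hC : 0 ≤ C) (hv : ∀ m ≤ n, C * (m : ℝ) ^ p ≤ v m) :
    C ^ q * ((n : ℝ) ^ (p * q + 1) / (p * q + 1)) ≤ ∑ m ∈ range (n + 1), v m ^ q := by
  have hterm : ∀ m ∈ range (n + 1), C ^ q * (m : ℝ) ^ (p * q) ≤ v m ^ q := by
    intro m hm
    rw [Real.rpow_mul m.cast_nonneg, ← Real.mul_rpow hC (by positivity)]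
    exact Real.rpow_le_rpow (by positivity) (hv m (by simpa [Nat.lt_succ_iff] using hm)) hq
  calc C ^ q * ((n : ℝ) ^ (p * q + 1) / (p * q + 1))
      ≤ C ^ q * ∑ m ∈ range (n + 1), (m : ℝ) ^ (p * q) := by
        gcongr
        exact rpow_succ_div_le_sum_range_rpow (by positivity) n
    _ ≤ ∑ m ∈ range (n + 1), v m ^ q := by
        rw [mul_sum]
        exact sum_le_sum hterm

lemma rpow_mul_add_one_rpow_le {x a b : ℝ} (hx : 2 ≤ x) (ha : 0 ≤ a) (hb : 0 ≤ b) :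
    x ^ a * (x + 1) ^ b ≤ 4 ^ (a + b) * (x - 1) ^ (a + b) := calc
  x ^ a * (x + 1) ^ b ≤ (x + 1) ^ a * (x + 1) ^ b := by gcongr; linarith
  _ = (x + 1) ^ (a + b) := (Real.rpow_add (by linarith) a b).symm
  _ ≤ (4 * (x - 1)) ^ (a + b) := by gcongr; linarith
  _ = 4 ^ (a + b) * (x - 1) ^ (a + b) := Real.mul_rpow (by norm_num) (by linarith)

lemma rpow_div_rpow_sub_div_mul_self {A d s : ℝ} (hA : 0 < A) (hd : d ≠ 0) (hs : s ≠ 0) :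
    (A ^ (d / s)) ^ ((d - s) / d) * A = A ^ (d / s) := by
  conv_lhs => rw [← Real.rpow_mul hA.le, ← Real.rpow_add_one hA.ne']
  congr 1
  field_simp
  ring

noncomputable def densityConstant (c₅ d s : ℝ) : ℝ :=
  ((4 : ℝ) ^ (-d - 1 + s) / (c₅ * (d + 1 - s))) ^ (d / s)

lemma densityConstant_mul_rpow_le_of_forall_lt {d s c₅ : ℝ} {v : ℕ → ℝ} {ℓ : ℕ} (hs0 : 0 < s)
    (hs1 : s < 1) (hsd : s ≤ d) (hc₅ : 0 < c₅) (hv : ∀ m, 0 ≤ v m) (hℓ : 2 ≤ ℓ)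
    (hrec : ∑ m ∈ range (ℓ + 1), v m ^ ((d - s) / d) ≤ c₅ * ((ℓ : ℝ) + 1) ^ (1 - s) * v ℓ)
    (ih : ∀ m < ℓ, densityConstant c₅ d s * (m : ℝ) ^ d ≤ v m) :
    densityConstant c₅ d s * (ℓ : ℝ) ^ d ≤ v ℓ := by
  obtain ⟨n, rfl⟩ : ∃ n, ℓ = n + 1 := ⟨ℓ - 1, by omega⟩
  unfold densityConstant at ih ⊢
  set A := (4 : ℝ) ^ (-d - 1 + s) / (c₅ * (d + 1 - s))
  set q := (d - s) / d
  have hd : 0 < d := by linarith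
  have hd1s : 0 < d + 1 - s := by linarith
  have hA : 0 < A := div_pos (by positivity) (mul_pos hc₅ hd1s)
  have hq : 0 ≤ q := div_nonneg (by linarith) hd.le
  have hAc : A * (c₅ * (d + 1 - s)) * 4 ^ (d + 1 - s) = 1 := by
    rw [div_mul_cancel₀ _ (mul_pos hc₅ hd1s).ne', ← Real.rpow_add (by norm_num)]
    norm_num
  clear_value A
  have hsum : (A ^ (d / s)) ^ q * ((n : ℝ) ^ (d + 1 - s) / (d + 1 - s))
      ≤ ∑ m ∈ range (n + 2), v m ^ q := by
    have h := mul_rpow_le_sum_range_rpow hd.le hq (Real.rpow_nonneg hA.le _)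
      (fun m hm => ih m (Nat.lt_succ_of_le hm))
    rw [show d * q + 1 = d + 1 - s by simp only [q]; field_simp; ring] at h
    refine h.trans (sum_le_sum_of_subset_of_nonneg (range_mono (by omega)) ?_)
    exact fun m _ _ => Real.rpow_nonneg (hv m) q
  have hn : (1 : ℝ) ≤ n := by exact_mod_cast (by omega : 1 ≤ n)
  have hgeo := rpow_mul_add_one_rpow_le (x := ((n + 1 : ℕ) : ℝ)) (by push_cast; linarith)
    hd.le (by linarith : 0 ≤ 1 - s)
  rw [add_sub_assoc', Nat.cast_add_one, add_sub_cancel_right] at hgeo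
  have hpos : 0 < c₅ * (((n + 1 : ℕ) : ℝ) + 1) ^ (1 - s) := by positivity
  refine le_of_mul_le_mul_left ?_ hpos
  calc c₅ * (((n + 1 : ℕ) : ℝ) + 1) ^ (1 - s) * (A ^ (d / s) * ((n + 1 : ℕ) : ℝ) ^ d)
      = (A ^ (d / s)) ^ q * A * c₅
          * (((n + 1 : ℕ) : ℝ) ^ d * (((n + 1 : ℕ) : ℝ) + 1) ^ (1 - s)) := by
        rw [rpow_div_rpow_sub_div_mul_self hA hd.ne' hs0.ne']; ring
    _ ≤ (A ^ (d / s)) ^ q * A * c₅ * (4 ^ (d + 1 - s) * (n : ℝ) ^ (d + 1 - s)) := by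
        push_cast at hgeo ⊢; gcongr
    _ = (A ^ (d / s)) ^ q * ((n : ℝ) ^ (d + 1 - s) / (d + 1 - s)) := by
        rw [mul_div_assoc', eq_div_iff hd1s.ne']
        linear_combination ((A ^ (d / s)) ^ q * (n : ℝ) ^ (d + 1 - s)) * hAc
    _ ≤ c₅ * (((n + 1 : ℕ) : ℝ) + 1) ^ (1 - s) * v (n + 1) := hsum.trans hrec

theorem density_iteration_lemma_general (d : ℕ) (hd : 1 ≤ d) (s : ℝ) (hs : s ∈ Set.Ioo (0 : ℝ) 1)
    (c₅ : ℝ) (hc₅ : 0 < c₅) (v : ℕ → ℝ)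
    (hv : ∀ m, 0 ≤ v m) (hv1 : 1 ≤ v 1)
    (hrec : ∀ ℓ : ℕ, 2 ≤ ℓ →
      ∑ m ∈ Finset.range (ℓ + 1), (v m) ^ (((d : ℝ) - s) / d)
        ≤ c₅ * ((ℓ : ℝ) + 1) ^ (1 - s) * v ℓ)
    (hcbar : ((4 : ℝ) ^ (-(d : ℝ) - 1 + s) / (c₅ * ((d : ℝ) + 1 - s))) ^ ((d : ℝ) / s) ≤ 1) :
    ∀ ℓ : ℕ,
      ((4 : ℝ) ^ (-(d : ℝ) - 1 + s) / (c₅ * ((d : ℝ) + 1 - s))) ^ ((d : ℝ) / s)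
        * (ℓ : ℝ) ^ (d : ℝ) ≤ v ℓ := by
  obtain ⟨hs0, hs1⟩ := hs
  have hsd : s ≤ d := hs1.le.trans (by exact_mod_cast hd)
  intro ℓ
  induction ℓ using Nat.strong_induction_on with
  | _ ℓ ih =>
    match ℓ with
    | 0 => simpa [Real.zero_rpow (by exact_mod_cast (by omega : d ≠ 0) : (d : ℝ) ≠ 0)] using hv 0
    | 1 => simpa using hcbar.trans hv1
    | ℓ + 2 =>
      exact densityConstant_mul_rpow_le_of_forall_lt hs0 hs1 hsd hc₅ hv (by omega)
        (hrec _ (by omega)) ih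

/-- iteration lemma for the density estimates. If `(v_m)` is nonnegative with
`v_0, v_1 ≥ 1` and satisfies `Σ_{m=0}^ℓ v_m^{(d-s)/d} ≤ c₅ (ℓ+1)^{1-s} v_ℓ` for all `ℓ ≥ 2`,
then `v_ℓ ≥ c̄ ℓ^d` for all `ℓ`, with `c̄ = [4^{-d-1+s}/(c₅(d+1-s))]^{d/s}` (assumed `≤ 1`). -/
theorem density_iteration_lemma (d : ℕ) (hd : 1 ≤ d) (s : ℝ) (hs : s ∈ Set.Ioo (0 : ℝ) 1)
    (c₅ : ℝ) (hc₅ : 0 < c₅) (v : ℕ → ℝ)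
    (hv : ∀ m, 0 ≤ v m) (hv0 : 1 ≤ v 0) (hv1 : 1 ≤ v 1)
    (hrec : ∀ ℓ : ℕ, 2 ≤ ℓ →
      ∑ m ∈ Finset.range (ℓ + 1), (v m) ^ (((d : ℝ) - s) / d)
        ≤ c₅ * ((ℓ : ℝ) + 1) ^ (1 - s) * v ℓ)
    (hcbar : ((4 : ℝ) ^ (-(d : ℝ) - 1 + s) / (c₅ * ((d : ℝ) + 1 - s))) ^ ((d : ℝ) / s) ≤ 1) :
    ∀ ℓ : ℕ,
      ((4 : ℝ) ^ (-(d : ℝ) - 1 + s) / (c₅ * ((d : ℝ) + 1 - s))) ^ ((d : ℝ) / s)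
        * (ℓ : ℝ) ^ (d : ℝ) ≤ v ℓ :=
  density_iteration_lemma_general d hd s hs c₅ hc₅ v hv hv1 hrec hcbar
end

section
/- Let u : Z^d → {-1,1} be a configuration satisfying the Birkhoff property with respect to ω ∈ R^d \ {0} and period τ ∈ N: for every k ∈ τZ^d, the translate (T_k u)_i := u_{i-k} satisfies T_k u ≤ u pointwise if ω·k ≤ 0, and T_k u ≥ u if ω·k ≥ 0. Suppose there exists q ∈ Z^d with u_i = -1 for all i in the cube C_τ(q) := q + {0,1,...,τ-1}^d. Then u_i = -1 for every i ∈ Z^d with (ω/|ω|)·i ≥ (ω/|ω|)·q + √d τ, where |ω| is the ℓ^1 norm of ω. -/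
/-!
Reduce `i - q` coordinatewise modulo `τ`: this writes `i = k + j` with `k ∈ τℤ^d` and `j` in the
cube `C_τ(q)`. The remainder `j - q` lies in `[0, τ)^d`, so `ω · (j - q) ≤ τ |ω|`, and the hypothesis
`ω · (i - q) ≥ √d τ |ω| ≥ τ |ω|` gives `ω · k ≥ 0`. The Birkhoff property then yields
`u_i ≤ u_{i-k} = u_j = -1`.
-/

open Finset

section

variable {ι : Type*}

theorem exists_dvd_sub_mem_Ico {τ : ℤ} (hτ : 0 < τ) (v : ι → ℤ) :
    ∃ k : ι → ℤ, (∀ n, τ ∣ k n) ∧ ∀ n, 0 ≤ v n - k n ∧ v n - k n < τ :=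
  ⟨fun n => v n - v n % τ, fun n => Int.dvd_self_sub_of_emod_eq rfl, fun n => by
    simpa only [sub_sub_cancel] using ⟨Int.emod_nonneg _ hτ.ne', Int.emod_lt_of_pos _ hτ⟩⟩

variable [Fintype ι]

theorem sum_mul_le_mul_sum_abs (ω r : ι → ℝ) {c : ℝ} (hr : ∀ n, 0 ≤ r n ∧ r n ≤ c) :
    ∑ n, ω n * r n ≤ c * ∑ n, |ω n| := by
  rw [mul_sum]
  refine sum_le_sum fun n _ => ?_
  calc ω n * r n ≤ |ω n| * r n := mul_le_mul_of_nonneg_right (le_abs_self _) (hr n).1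
    _ ≤ |ω n| * c := mul_le_mul_of_nonneg_left (hr n).2 (abs_nonneg _)
    _ = c * |ω n| := mul_comm _ _

theorem exists_period_sub_mem_cube {τ : ℕ} (hτ : 0 < τ) (ω : ι → ℝ) (q i : ι → ℤ)
    (hi : τ * ∑ n, |ω n| ≤ ∑ n, ω n * i n - ∑ n, ω n * q n) :
    ∃ k : ι → ℤ, (∀ n, (τ : ℤ) ∣ k n) ∧ 0 ≤ ∑ n, ω n * k n ∧
      ∀ n, q n ≤ (i - k) n ∧ (i - k) n < q n + τ := by
  obtain ⟨k, hk, hrem⟩ := exists_dvd_sub_mem_Ico (Int.natCast_pos.mpr hτ) (i - q)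
  have hrem_le : ∀ n, 0 ≤ ((i n - q n - k n : ℤ) : ℝ) ∧ ((i n - q n - k n : ℤ) : ℝ) ≤ τ :=
    fun n => ⟨by exact_mod_cast (hrem n).1, by exact_mod_cast (hrem n).2.le⟩
  have hsplit : ∑ n, ω n * k n
      = (∑ n, ω n * i n - ∑ n, ω n * q n) - ∑ n, ω n * ((i n - q n - k n : ℤ) : ℝ) := by
    simp only [← sum_sub_distrib]
    exact sum_congr rfl fun n _ => by push_cast; ring
  refine ⟨k, hk, ?_, fun n => ?_⟩
  · linarith [sum_mul_le_mul_sum_abs ω _ hrem_le]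
  · have hrem_n := hrem n
    simp only [Pi.sub_apply] at hrem_n ⊢
    constructor <;> linarith

end

/-- rigidity of Birkhoff configurations with a fat plateau. If `u` has the
Birkhoff property with respect to `ω` and period `τ`, and `u ≡ -1` on a cube
`C_τ(q) = q + {0,…,τ-1}^d`, then `u_i = -1` whenever
`(ω/|ω|)·i ≥ (ω/|ω|)·q + √d τ` (with `|ω|` the `ℓ¹` norm of `ω`). -/
theorem birkhoff_plateau_rigidity {d : ℕ} (hd : 1 ≤ d) (τ : ℕ) (hτ : 1 ≤ τ)
    (ω : Fin d → ℝ) (hω : ω ≠ 0)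
    (u : (Fin d → ℤ) → ℝ) (hu : ∀ i, u i = 1 ∨ u i = -1)
    (hBirk : ∀ k : Fin d → ℤ, (∀ n, (τ : ℤ) ∣ k n) →
      (((∑ n, ω n * k n) ≤ 0 → ∀ i, u (i - k) ≤ u i) ∧
        (0 ≤ (∑ n, ω n * k n) → ∀ i, u i ≤ u (i - k))))
    (q : Fin d → ℤ)
    (hq : ∀ i : Fin d → ℤ, (∀ n, q n ≤ i n ∧ i n < q n + τ) → u i = -1) :
    ∀ i : Fin d → ℤ,
      (∑ n, ω n * q n) / (∑ n, |ω n|) + Real.sqrt d * τ ≤ (∑ n, ω n * i n) / (∑ n, |ω n|) →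
      u i = -1 := by
  intro i hi
  have hnorm_pos : 0 < ∑ n, |ω n| := by
    obtain ⟨n, hn⟩ := Function.ne_iff.mp hω
    exact sum_pos' (fun m _ => abs_nonneg _) ⟨n, mem_univ n, abs_pos.mpr hn⟩
  have hsqrt : 1 ≤ Real.sqrt d := Real.one_le_sqrt.mpr (by exact_mod_cast hd)
  have hheight : τ * ∑ n, |ω n| ≤ ∑ n, ω n * i n - ∑ n, ω n * q n := by
    have hscaled : Real.sqrt d * τ * ∑ n, |ω n| ≤ ∑ n, ω n * i n - ∑ n, ω n * q n := by
      rw [← le_div_iff₀ hnorm_pos, sub_div]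
      linarith
    linarith [mul_nonneg (sub_nonneg.mpr hsqrt) (mul_nonneg (Nat.cast_nonneg (α := ℝ) τ) hnorm_pos.le)]
  obtain ⟨k, hk, hk_nonneg, hcube⟩ := exists_period_sub_mem_cube hτ ω q i hheight
  have hle : u i ≤ -1 := hq (i - k) hcube ▸ (hBirk k hk).2 hk_nonneg i
  exact (hu i).resolve_left fun h => by linarith
end
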